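/- Let n be a positive integer and α > n/2 a real number. There exists a constant C > 0, depending only on n and α, such that the following holds for every positive integer N. Let u : ℤ^n → ℂ satisfy Σ_{k∈ℤ^n} (1+‖k‖₂^{4α}) |u_k|² < ∞, and let U(y) = Σ_{k∈ℤ^n} u_k e^{ik·y} (which converges absolutely and uniformly on ℝ^n). Let K_N = {k ∈ ℤ^n : −N ≤ k_j < N for all j}, let the grid points be y_j = (π/N) j for j ∈ {0,1,…,2N−1}^n, define the discrete Fourier coefficients ũ_k = (2N)^{-n} Σ_j U(y_j) e^{−ik·y_j} for k ∈ K_N, and the trigonometric interpolant (I_N U)(y) = Σ_{k∈K_N} ũ_k e^{ik·y}. Then ‖I_N U − U‖ ≤ C N^{−α} (Σ_{k∈ℤ^n} ‖k‖₂^{4α} |u_k|²)^{1/2}. -/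

import Mathlib

open MeasureTheory
open scoped Real

/-- The Fourier series with coefficients `u`. -/
noncomputable def fourierSeries (n : ℕ) (u : (Fin n → ℤ) → ℂ) (y : Fin n → ℝ) : ℂ :=
  ∑' k : Fin n → ℤ, u k * Complex.exp (Complex.I * ((∑ j, (k j : ℝ) * y j : ℝ) : ℂ))

/-- The normalized `L²` norm of a `2π`-periodic function over one period cell. -/
noncomputable def L2NormPeriodic (n : ℕ) (f : (Fin n → ℝ) → ℂ) : ℝ :=
  Real.sqrt ((((2 * π) ^ n)⁻¹ : ℝ) *
    ∫ y in Set.Icc (0 : Fin n → ℝ) (fun _ => 2 * π), ‖f y‖ ^ 2)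

/-- The trigonometric interpolant `I_N U` of `U` on the uniform grid with `2N`
points per coordinate: `(I_N U)(y) = Σ_{k ∈ K_N} ũ_k e^{ik·y}` with discrete
Fourier coefficients `ũ_k = (2N)^{-n} Σ_j U(y_j) e^{-ik·y_j}`, the frequencies
`k ∈ K_N` being indexed by `m : Fin n → Fin (2N)` via `k i = m i - N`. -/
noncomputable def trigInterpolant (n N : ℕ) (U : (Fin n → ℝ) → ℂ)
    (y : Fin n → ℝ) : ℂ :=
  ∑ m : Fin n → Fin (2 * N),
    ((((2 * N : ℕ) : ℝ) ^ n)⁻¹ •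
      ∑ j : Fin n → Fin (2 * N),
        U (fun i => (π / (N : ℝ)) * ((j i : ℕ) : ℝ)) *
          Complex.exp (-Complex.I *
            ((∑ i, (((m i : ℕ) : ℝ) - (N : ℝ)) * ((π / (N : ℝ)) * ((j i : ℕ) : ℝ)) : ℝ) : ℂ))) *
      Complex.exp (Complex.I * ((∑ i, (((m i : ℕ) : ℝ) - (N : ℝ)) * y i : ℝ) : ℂ))

/-!
Sampling on the grid only sees a frequency `l ∈ ℤⁿ` modulo `2N`: by discrete orthogonality
of the characters `e_d(y) = e^{i d·y}` on the grid, the discrete Fourier coefficient at `k ∈ K_N`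
is the sum of the `u_l` over the aliases `l ≡ k (mod 2N)`. Hence `I_N U = Σ_l u_l e_{κ(l)}`, where
`κ(l) ∈ K_N` is the alias of `l`, and `I_N U - U = Σ_l u_l (e_{κ(l)} - e_l)`. Since `κ(l) = l`
when `‖l‖ < N`, the error is bounded pointwise by `2 Σ_{‖l‖ ≥ N} |u_l|`, and Cauchy–Schwarz
against the weights `‖l‖^{-2α}` bounds this by `2 (Σ_l ‖l‖^{-2α})^{1/2} N^{-α} |u|_{X_α}`; the
lattice sum converges because `2α > n`.
-/

noncomputable def latticeNorm {n : ℕ} (k : Fin n → ℤ) : ℝ := √(∑ j, (k j : ℝ) ^ 2)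

lemma latticeNorm_nonneg {n : ℕ} (k : Fin n → ℤ) : 0 ≤ latticeNorm k := Real.sqrt_nonneg _

lemma abs_le_latticeNorm {n : ℕ} (k : Fin n → ℤ) (j : Fin n) : |(k j : ℝ)| ≤ latticeNorm k := by
  rw [latticeNorm, ← Real.sqrt_sq_eq_abs]
  exact Real.sqrt_le_sqrt <|
    Finset.single_le_sum (fun i _ => sq_nonneg (k i : ℝ)) (Finset.mem_univ j)

lemma one_le_latticeNorm {n : ℕ} {k : Fin n → ℤ} (hk : k ≠ 0) : 1 ≤ latticeNorm k := by
  obtain ⟨j, hj⟩ := Function.ne_iff.1 hk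
  calc (1 : ℝ) ≤ |(k j : ℝ)| := by exact_mod_cast Int.one_le_abs hj
    _ ≤ latticeNorm k := abs_le_latticeNorm k j

lemma summable_latticeNorm_rpow {n : ℕ} {r : ℝ} (hr : r < -n) :
    Summable fun k : Fin n → ℤ => latticeNorm k ^ r := by
  set b := (EuclideanSpace.basisFun (Fin n) ℝ).toBasis.restrictScalars ℤ
  have hrank : Module.finrank ℤ
      (Submodule.span ℤ (Set.range (EuclideanSpace.basisFun (Fin n) ℝ).toBasis)) = n := by
    rw [ZLattice.rank ℝ]
    simp
  have hcoe (k : Fin n → ℤ) :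
      (b.equivFun.symm k : EuclideanSpace ℝ (Fin n)) = WithLp.toLp 2 (fun i => (k i : ℝ)) := by
    rw [Module.Basis.equivFun_symm_apply, Submodule.coe_sum]
    ext i
    simp only [Submodule.coe_smul_of_tower, b, Module.Basis.restrictScalars_apply]
    simp [Pi.single_apply]
  refine (b.equivFun.symm.toEquiv.summable_iff.2
    (ZLattice.summable_norm_rpow _ r (by rwa [hrank]))).congr fun k => ?_
  change ‖(b.equivFun.symm k : EuclideanSpace ℝ (Fin n))‖ ^ r = _
  rw [hcoe, EuclideanSpace.norm_eq]
  simp [latticeNorm]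

noncomputable def planeWave {n : ℕ} (k : Fin n → ℤ) (y : Fin n → ℝ) : ℂ :=
  Complex.exp (Complex.I * ((∑ j, (k j : ℝ) * y j : ℝ) : ℂ))

lemma norm_planeWave {n : ℕ} (k : Fin n → ℤ) (y : Fin n → ℝ) : ‖planeWave k y‖ = 1 :=
  Complex.norm_exp_I_mul_ofReal _

lemma planeWave_add {n : ℕ} (k l : Fin n → ℤ) (y : Fin n → ℝ) :
    planeWave (k + l) y = planeWave k y * planeWave l y := by
  simp only [planeWave, ← Complex.exp_add, Pi.add_apply, Int.cast_add, add_mul,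
    Finset.sum_add_distrib, Complex.ofReal_add, mul_add]

lemma planeWave_eq_prod {n : ℕ} (k : Fin n → ℤ) (y : Fin n → ℝ) :
    planeWave k y = ∏ j, Complex.exp (Complex.I * ((k j * y j : ℝ) : ℂ)) := by
  simp only [planeWave, Complex.ofReal_sum, Finset.mul_sum, Complex.exp_sum]

lemma fourierSeries_eq_tsum_planeWave (n : ℕ) (u : (Fin n → ℤ) → ℂ) (y : Fin n → ℝ) :
    fourierSeries n u y = ∑' k, u k * planeWave k y := rfl

lemma sum_exp_two_pi_mul_div {M : ℕ} (hM : 0 < M) (d : ℤ) :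
    ∑ a : Fin M, Complex.exp (Complex.I * ((d * (2 * π / M * (a : ℕ)) : ℝ) : ℂ))
      = if (M : ℤ) ∣ d then (M : ℂ) else 0 := by
  set ζ := Complex.exp (2 * π * Complex.I / M)
  have hζ : IsPrimitiveRoot ζ M := Complex.isPrimitiveRoot_exp M hM.ne'
  have hpow (a : ℕ) : Complex.exp (Complex.I * ((d * (2 * π / M * a) : ℝ) : ℂ)) = (ζ ^ d) ^ a := by
    rw [← Complex.exp_int_mul, ← Complex.exp_nat_mul]
    push_cast
    ring_nf
  simp only [hpow, Fin.sum_univ_eq_sum_range ((ζ ^ d) ^ ·) M]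
  split_ifs with hd
  · simp [(hζ.zpow_eq_one_iff_dvd d).2 hd]
  · have hM : (ζ ^ d) ^ M = 1 := by
      rw [← zpow_natCast, ← zpow_mul, mul_comm, zpow_mul, zpow_natCast, hζ.pow_eq_one, one_zpow]
    rw [geom_sum_eq (mt (hζ.zpow_eq_one_iff_dvd d).1 hd), hM, sub_self, zero_div]

section Grid

variable {n N : ℕ}

noncomputable def gridPoint (N : ℕ) (j : Fin n → Fin (2 * N)) : Fin n → ℝ :=
  fun i => π / N * (j i : ℕ)

def gridFreq (N : ℕ) (m : Fin n → Fin (2 * N)) : Fin n → ℤ := fun i => (m i : ℤ) - N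

lemma sum_planeWave_gridPoint (hN : 0 < N) (d : Fin n → ℤ) :
    ∑ j : Fin n → Fin (2 * N), planeWave d (gridPoint N j)
      = if ∀ i, (2 * N : ℤ) ∣ d i then ((2 * N : ℕ) : ℂ) ^ n else 0 := by
  classical
  have hgrid (i : Fin n) (a : Fin (2 * N)) : (d i : ℝ) * (π / N * (a : ℕ))
      = d i * (2 * π / (2 * N : ℕ) * (a : ℕ)) := by
    push_cast
    field_simp
  calc ∑ j : Fin n → Fin (2 * N), planeWave d (gridPoint N j)
      = ∏ i, ∑ a : Fin (2 * N),
          Complex.exp (Complex.I * ((d i * (2 * π / (2 * N : ℕ) * (a : ℕ)) : ℝ) : ℂ)) := by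
        simp only [Fintype.prod_sum, planeWave_eq_prod, gridPoint, hgrid]
    _ = _ := by
        simp only [sum_exp_two_pi_mul_div (Nat.mul_pos two_pos hN), Finset.prod_ite_zero,
          Finset.prod_const, Finset.card_univ, Fintype.card_fin, Finset.mem_univ, true_implies]
        push_cast
        rfl

-- The index `m` whose frequency `m - N ∈ [-N, N)` is congruent to `l` modulo `2N`.
def aliasIndex (hN : 0 < N) (l : ℤ) : Fin (2 * N) :=
  ⟨((l + N) % (2 * N : ℤ)).toNat, by
    have := Int.emod_lt_of_pos (l + N) (by positivity : (0 : ℤ) < 2 * N)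
    omega⟩

lemma dvd_sub_iff_aliasIndex_eq (hN : 0 < N) (l : ℤ) (a : Fin (2 * N)) :
    (2 * N : ℤ) ∣ l - ((a : ℕ) - N) ↔ aliasIndex hN l = a := by
  have h2N : (0 : ℤ) < 2 * N := by positivity
  have ha : ((a : ℕ) : ℤ) % (2 * N) = (a : ℕ) := Int.emod_eq_of_lt (by positivity) (by omega)
  rw [show l - ((a : ℕ) - N) = (l + N) - (a : ℕ) by ring, ← Int.modEq_iff_dvd, Int.ModEq, ha,
    Fin.ext_iff]
  change _ ↔ ((l + N) % (2 * N : ℤ)).toNat = (a : ℕ)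
  have := Int.emod_nonneg (l + N) h2N.ne'
  omega

lemma aliasIndex_sub_eq_self (hN : 0 < N) {l : ℤ} (hl : |l| < N) :
    ((aliasIndex hN l : ℕ) : ℤ) - N = l := by
  rw [abs_lt] at hl
  change (((l + N) % (2 * N : ℤ)).toNat : ℤ) - N = l
  rw [Int.emod_eq_of_lt (by omega) (by omega)]
  omega

def aliasOf (hN : 0 < N) (l : Fin n → ℤ) : Fin n → Fin (2 * N) := fun i => aliasIndex hN (l i)

lemma forall_dvd_sub_gridFreq_iff (hN : 0 < N) (l : Fin n → ℤ) (m : Fin n → Fin (2 * N)) :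
    (∀ i, (2 * N : ℤ) ∣ (l - gridFreq N m) i) ↔ aliasOf hN l = m := by
  simp only [funext_iff, aliasOf, Pi.sub_apply, gridFreq, dvd_sub_iff_aliasIndex_eq hN]

lemma gridFreq_aliasOf_of_latticeNorm_lt (hN : 0 < N) {l : Fin n → ℤ}
    (hl : latticeNorm l < N) : gridFreq N (aliasOf hN l) = l := by
  funext i
  refine aliasIndex_sub_eq_self hN ?_
  exact_mod_cast (abs_le_latticeNorm l i).trans_lt hl

end Grid

section Aliasing

variable {n N : ℕ}

noncomputable def discreteFourierCoeff (N : ℕ) (U : (Fin n → ℝ) → ℂ) (m : Fin n → Fin (2 * N)) :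
    ℂ :=
  (((2 * N : ℕ) : ℝ) ^ n)⁻¹ • ∑ j, U (gridPoint N j) * planeWave (-gridFreq N m) (gridPoint N j)

lemma trigInterpolant_eq_sum (U : (Fin n → ℝ) → ℂ) (y : Fin n → ℝ) :
    trigInterpolant n N U y
      = ∑ m, discreteFourierCoeff N U m * planeWave (gridFreq N m) y := by
  simp only [trigInterpolant, discreteFourierCoeff, planeWave, gridFreq, gridPoint, Pi.neg_apply]
  push_cast
  simp only [neg_mul, Finset.sum_neg_distrib, mul_neg]
  rfl

lemma discreteFourierCoeff_fourierSeries (hN : 0 < N) {u : (Fin n → ℤ) → ℂ}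
    (hu : Summable fun l => ‖u l‖) (m : Fin n → Fin (2 * N)) :
    discreteFourierCoeff N (fourierSeries n u) m = ∑' l, if aliasOf hN l = m then u l else 0 := by
  have hsummable (j : Fin n → Fin (2 * N)) :
      Summable fun l => u l * planeWave (l - gridFreq N m) (gridPoint N j) :=
    hu.of_norm_bounded fun l => by rw [norm_mul, norm_planeWave, mul_one]
  have hcard : (((2 * N : ℕ) : ℝ) ^ n)⁻¹ • ((2 * N : ℕ) : ℂ) ^ n = 1 := by
    have : ((2 * N : ℕ) : ℂ) ≠ 0 := by exact_mod_cast (Nat.mul_pos two_pos hN).ne'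
    rw [Complex.real_smul, Complex.ofReal_inv, Complex.ofReal_pow, Complex.ofReal_natCast,
      inv_mul_cancel₀ (pow_ne_zero n this)]
  calc discreteFourierCoeff N (fourierSeries n u) m
      = (((2 * N : ℕ) : ℝ) ^ n)⁻¹ •
          ∑ j, ∑' l, u l * planeWave (l - gridFreq N m) (gridPoint N j) := by
        simp only [discreteFourierCoeff, fourierSeries_eq_tsum_planeWave, ← tsum_mul_right,
          mul_assoc, sub_eq_add_neg, planeWave_add]
    _ = (((2 * N : ℕ) : ℝ) ^ n)⁻¹ •
          ∑' l, u l * ∑ j, planeWave (l - gridFreq N m) (gridPoint N j) := by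
        simp only [← Summable.tsum_finsetSum fun j _ => hsummable j, Finset.mul_sum]
    _ = ∑' l, if aliasOf hN l = m then u l else 0 := by
        simp only [sum_planeWave_gridPoint hN, forall_dvd_sub_gridFreq_iff hN, ← tsum_const_smul'']
        congr 1 with l
        split_ifs
        · rw [← mul_smul_comm, hcard, mul_one]
        · rw [mul_zero, smul_zero]

lemma trigInterpolant_fourierSeries (hN : 0 < N) {u : (Fin n → ℤ) → ℂ}
    (hu : Summable fun l => ‖u l‖) (y : Fin n → ℝ) :
    trigInterpolant n N (fourierSeries n u) y
      = ∑' l, u l * planeWave (gridFreq N (aliasOf hN l)) y := by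
  have hsummable (m : Fin n → Fin (2 * N)) :
      Summable fun l => if aliasOf hN l = m then u l * planeWave (gridFreq N m) y else 0 :=
    hu.of_norm_bounded fun l => by split_ifs <;> simp [norm_planeWave]
  simp only [trigInterpolant_eq_sum, discreteFourierCoeff_fourierSeries hN hu, ← tsum_mul_right,
    ite_mul, zero_mul]
  rw [← Summable.tsum_finsetSum fun m _ => hsummable m]
  simp only [Finset.sum_ite_eq, Finset.mem_univ, if_true]

lemma norm_trigInterpolant_sub_fourierSeries_le (hN : 0 < N) {u : (Fin n → ℤ) → ℂ}
    (hu : Summable fun l => ‖u l‖) (y : Fin n → ℝ) :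
    ‖trigInterpolant n N (fourierSeries n u) y - fourierSeries n u y‖
      ≤ 2 * ∑' l, if (N : ℝ) ≤ latticeNorm l then ‖u l‖ else 0 := by
  set tail : (Fin n → ℤ) → ℝ := fun l => if (N : ℝ) ≤ latticeNorm l then ‖u l‖ else 0
  have htail : Summable tail :=
    hu.of_nonneg_of_le (fun l => by simp only [tail]; split_ifs <;> positivity)
      fun l => by simp only [tail]; split_ifs <;> simp
  have hterm (l : Fin n → ℤ) :
      ‖u l * (planeWave (gridFreq N (aliasOf hN l)) y - planeWave l y)‖ ≤ 2 * tail l := by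
    by_cases hl : (N : ℝ) ≤ latticeNorm l
    · calc ‖u l * (planeWave (gridFreq N (aliasOf hN l)) y - planeWave l y)‖
          ≤ ‖u l‖ * (‖planeWave (gridFreq N (aliasOf hN l)) y‖ + ‖planeWave l y‖) := by
            rw [norm_mul]
            gcongr
            exact norm_sub_le _ _
        _ = 2 * tail l := by
            rw [norm_planeWave, norm_planeWave]
            simp only [tail, if_pos hl]
            ring
    · simp [gridFreq_aliasOf_of_latticeNorm_lt hN (not_le.1 hl), tail, hl]
  have hsummable (k : (Fin n → ℤ) → Fin n → ℤ) : Summable fun l => u l * planeWave (k l) y :=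
    hu.of_norm_bounded fun l => by rw [norm_mul, norm_planeWave, mul_one]
  rw [trigInterpolant_fourierSeries hN hu, fourierSeries_eq_tsum_planeWave,
    ← (hsummable _).tsum_sub (hsummable fun l => l)]
  simp only [← mul_sub]
  exact tsum_of_norm_bounded (htail.hasSum.mul_left 2) hterm

end Aliasing

lemma summable_and_tsum_mul_le_sqrt_mul_sqrt {ι : Type*} {f g : ι → ℝ} (hf : ∀ i, 0 ≤ f i)
    (hg : ∀ i, 0 ≤ g i) (hf2 : Summable fun i => f i ^ 2) (hg2 : Summable fun i => g i ^ 2) :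
    (Summable fun i => f i * g i) ∧
      ∑' i, f i * g i ≤ √(∑' i, f i ^ 2) * √(∑' i, g i ^ 2) := by
  have := Real.summable_and_inner_le_Lp_mul_Lq_tsum_of_nonneg Real.HolderConjugate.two_two hf hg
    (by simpa only [Real.rpow_two] using hf2) (by simpa only [Real.rpow_two] using hg2)
  simpa only [Real.rpow_two, Real.sqrt_eq_rpow] using this

lemma ite_rpow_neg_mul_rpow_mul {N r a : ℝ} (hN : 0 < N) (x : ℝ) :
    (if N ≤ r then r ^ (-a) else 0) * (r ^ a * x) = if N ≤ r then x else 0 := by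
  split_ifs with hr
  · rw [← mul_assoc, ← Real.rpow_add (hN.trans_le hr), neg_add_cancel, Real.rpow_zero, one_mul]
  · rw [zero_mul]

lemma sq_ite_rpow_neg_le {N r a : ℝ} (hN : 0 < N) (hr : 0 ≤ r) (ha : 0 ≤ a) :
    (if N ≤ r then r ^ (-a) else 0) ^ 2 ≤ N ^ (-a) * r ^ (-a) := by
  split_ifs with hNr
  · rw [sq]
    exact mul_le_mul_of_nonneg_right (Real.rpow_le_rpow_of_nonpos hN hNr (by linarith))
      (Real.rpow_nonneg hr _)
  · rw [sq, zero_mul]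
    exact mul_nonneg (Real.rpow_nonneg hN.le _) (Real.rpow_nonneg hr _)

lemma summable_and_tsum_tail_le {n : ℕ} {α N : ℝ} (hα : (n : ℝ) < 2 * α) (hN : 0 < N)
    {u : (Fin n → ℤ) → ℂ} (hu : Summable fun l => latticeNorm l ^ (4 * α) * ‖u l‖ ^ 2) :
    (Summable fun l => if N ≤ latticeNorm l then ‖u l‖ else 0) ∧
      ∑' l, (if N ≤ latticeNorm l then ‖u l‖ else 0)
        ≤ √(∑' l : Fin n → ℤ, latticeNorm l ^ (-(2 * α))) * N ^ (-α) *
            √(∑' l, latticeNorm l ^ (4 * α) * ‖u l‖ ^ 2) := by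
  have hα0 : 0 ≤ 2 * α := by linarith [(Nat.cast_nonneg n : (0 : ℝ) ≤ n)]
  have hS := summable_latticeNorm_rpow (n := n) (r := -(2 * α)) (by linarith)
  set f : (Fin n → ℤ) → ℝ := fun l => if N ≤ latticeNorm l then latticeNorm l ^ (-(2 * α)) else 0
  set g : (Fin n → ℤ) → ℝ := fun l => latticeNorm l ^ (2 * α) * ‖u l‖
  have hfg (l : Fin n → ℤ) : f l * g l = if N ≤ latticeNorm l then ‖u l‖ else 0 :=
    ite_rpow_neg_mul_rpow_mul hN _
  have hf2 (l : Fin n → ℤ) : f l ^ 2 ≤ N ^ (-(2 * α)) * latticeNorm l ^ (-(2 * α)) :=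
    sq_ite_rpow_neg_le hN (latticeNorm_nonneg l) hα0
  have hg2 (l : Fin n → ℤ) : g l ^ 2 = latticeNorm l ^ (4 * α) * ‖u l‖ ^ 2 := by
    rw [mul_pow, ← Real.rpow_mul_natCast (latticeNorm_nonneg l)]
    ring_nf
  have hf0 (l : Fin n → ℤ) : 0 ≤ f l := by
    simp only [f]
    split_ifs
    exacts [Real.rpow_nonneg (latticeNorm_nonneg l) _, le_rfl]
  have hf2s : Summable fun l => f l ^ 2 :=
    (hS.mul_left _).of_nonneg_of_le (fun l => sq_nonneg _) hf2
  obtain ⟨hfgs, hle⟩ := summable_and_tsum_mul_le_sqrt_mul_sqrt (g := g) hf0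
    (fun l => mul_nonneg (Real.rpow_nonneg (latticeNorm_nonneg l) _) (norm_nonneg _)) hf2s
    (by simpa only [hg2] using hu)
  refine ⟨hfgs.congr hfg, ?_⟩
  have hsqrt : √(N ^ (-(2 * α))) = N ^ (-α) := by
    rw [Real.sqrt_eq_rpow, ← Real.rpow_mul hN.le]
    ring_nf
  calc ∑' l, (if N ≤ latticeNorm l then ‖u l‖ else 0)
      = ∑' l, f l * g l := tsum_congr fun l => (hfg l).symm
    _ ≤ √(∑' l, f l ^ 2) * √(∑' l, g l ^ 2) := hle
    _ ≤ √(N ^ (-(2 * α)) * ∑' l, latticeNorm l ^ (-(2 * α))) *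
          √(∑' l, latticeNorm l ^ (4 * α) * ‖u l‖ ^ 2) := by
        rw [← tsum_mul_left, tsum_congr hg2]
        exact mul_le_mul_of_nonneg_right
          (Real.sqrt_le_sqrt (hf2s.tsum_le_tsum hf2 (hS.mul_left _))) (Real.sqrt_nonneg _)
    _ = _ := by
        rw [Real.sqrt_mul (by positivity), hsqrt]
        ring

lemma summable_norm_of_summable_latticeNorm_rpow_mul_sq {n : ℕ} {α : ℝ} (hα : (n : ℝ) < 2 * α)
    {u : (Fin n → ℤ) → ℂ} (hu : Summable fun l => latticeNorm l ^ (4 * α) * ‖u l‖ ^ 2) :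
    Summable fun l => ‖u l‖ := by
  refine (summable_and_tsum_tail_le hα one_pos hu).1.congr_cofinite ?_
  filter_upwards [Filter.eventually_cofinite_ne 0] with l hl
  rw [if_pos (one_le_latticeNorm hl)]

lemma L2NormPeriodic_le_of_forall_norm_le {n : ℕ} {f : (Fin n → ℝ) → ℂ} {B : ℝ} (hB : 0 ≤ B)
    (h : ∀ y, ‖f y‖ ≤ B) : L2NormPeriodic n f ≤ B := by
  set s := Set.Icc (0 : Fin n → ℝ) fun _ => 2 * π
  have hvol : volume.real s = (2 * π) ^ n := by
    simp [s, Measure.real, Real.volume_Icc_pi, Real.pi_pos.le]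
  have hint : ∫ y in s, ‖f y‖ ^ 2 ≤ B ^ 2 * (2 * π) ^ n := by
    have := norm_setIntegral_le_of_norm_le_const (μ := volume) isCompact_Icc.measure_lt_top
      fun y (_ : y ∈ s) => (by rw [norm_pow, norm_norm]; gcongr; exact h y : ‖‖f y‖ ^ 2‖ ≤ B ^ 2)
    rw [hvol, Real.norm_eq_abs] at this
    exact (le_abs_self _).trans this
  rw [L2NormPeriodic, ← Real.sqrt_sq hB]
  gcongr
  calc ((2 * π) ^ n)⁻¹ * ∫ y in s, ‖f y‖ ^ 2 ≤ ((2 * π) ^ n)⁻¹ * (B ^ 2 * (2 * π) ^ n) := by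
        gcongr
    _ = B ^ 2 := by field_simp

theorem trig_interpolation_error_general
    (n : ℕ) (α : ℝ) (hα : (n : ℝ) / 2 < α) :
    ∃ C : ℝ, 0 < C ∧
      ∀ N : ℕ, 0 < N →
        ∀ u : (Fin n → ℤ) → ℂ,
          Summable (fun k : Fin n → ℤ =>
            (1 + Real.sqrt (∑ j, ((k j : ℝ)) ^ 2) ^ (4 * α)) * ‖u k‖ ^ 2) →
          L2NormPeriodic n
              (fun y => trigInterpolant n N (fourierSeries n u) y - fourierSeries n u y)
            ≤ C * (N : ℝ) ^ (-α) *
                Real.sqrt (∑' k : Fin n → ℤ,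
                  Real.sqrt (∑ j, ((k j : ℝ)) ^ 2) ^ (4 * α) * ‖u k‖ ^ 2) := by
  have h2α : (n : ℝ) < 2 * α := by linarith
  set S := ∑' l : Fin n → ℤ, latticeNorm l ^ (-(2 * α))
  -- `S = 0` when `n = 0`, hence the `+ 1`.
  refine ⟨2 * √S + 1, by positivity, fun N hN u hu => ?_⟩
  have hX : Summable fun k => latticeNorm k ^ (4 * α) * ‖u k‖ ^ 2 :=
    hu.of_nonneg_of_le
      (fun k => mul_nonneg (Real.rpow_nonneg (latticeNorm_nonneg k) _) (sq_nonneg _))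
      fun k => by gcongr; exact le_add_of_nonneg_left zero_le_one
  change _ ≤ _ * √(∑' k, latticeNorm k ^ (4 * α) * ‖u k‖ ^ 2)
  calc L2NormPeriodic n _ ≤ 2 * ∑' l, if (N : ℝ) ≤ latticeNorm l then ‖u l‖ else 0 :=
        L2NormPeriodic_le_of_forall_norm_le
          (mul_nonneg zero_le_two (tsum_nonneg fun l => by split_ifs <;> positivity))
          (norm_trigInterpolant_sub_fourierSeries_le hN
            (summable_norm_of_summable_latticeNorm_rpow_mul_sq h2α hX))
    _ ≤ 2 * (√S * N ^ (-α) * √(∑' k, latticeNorm k ^ (4 * α) * ‖u k‖ ^ 2)) := by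
        gcongr
        exact (summable_and_tsum_tail_le h2α (Nat.cast_pos.2 hN) hX).2
    _ ≤ (2 * √S + 1) * N ^ (-α) * √(∑' k, latticeNorm k ^ (4 * α) * ‖u k‖ ^ 2) := by
        rw [← mul_assoc, ← mul_assoc]
        gcongr
        linarith

/-- Spectral accuracy of trigonometric interpolation: for `α > n/2` there is a
constant `C` such that `‖I_N U − U‖ ≤ C N^{-α} |u|_{X_α}` for every `N` and
every `U` with Fourier coefficients `u` of finite `X_α`-norm. -/
theorem trig_interpolation_error
    (n : ℕ) (hn : 0 < n) (α : ℝ) (hα : (n : ℝ) / 2 < α) :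
    ∃ C : ℝ, 0 < C ∧
      ∀ N : ℕ, 0 < N →
        ∀ u : (Fin n → ℤ) → ℂ,
          Summable (fun k : Fin n → ℤ =>
            (1 + Real.sqrt (∑ j, ((k j : ℝ)) ^ 2) ^ (4 * α)) * ‖u k‖ ^ 2) →
          L2NormPeriodic n
              (fun y => trigInterpolant n N (fourierSeries n u) y - fourierSeries n u y)
            ≤ C * (N : ℝ) ^ (-α) *
                Real.sqrt (∑' k : Fin n → ℤ,
                  Real.sqrt (∑ j, ((k j : ℝ)) ^ 2) ^ (4 * α) * ‖u k‖ ^ 2) :=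
  trig_interpolation_error_general n α hα
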